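/- arXiv:2408.06914 — 3 statements merged into one kernel-verified Lean document; each statement's English description precedes it below -/
import Mathlib

section
/- Let I₁, I₂ be finite subsets of D = [0,1] × [0,∞] and let c ∈ [0,∞]. Define Ψ_A(I₁,I₂,c) = I₁ ∪ {(p₂, c₂ + c) : (p₂,c₂) ∈ I₂}. Then PF(Ψ_A(I₁,I₂,c)) = PF(Ψ_A(PF(I₁),I₂,c)) = PF(Ψ_A(I₁,PF(I₂),c)). -/
open scoped ENNReal

/-- `D = [0,1] × [0,∞]`: probability–cost pairs, costs in the extended nonnegative
reals.  We encode it as the pairs `(p, c) : ℝ≥0∞ × ℝ≥0∞` with `p ≤ 1`. -/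
def Dom : Set (ℝ≥0∞ × ℝ≥0∞) := {d | d.1 ≤ 1}

/-- `(p,c) ⊑ (p',c')` iff `p ≥ p'` and `c ≤ c'`. -/
def sqle (d d' : ℝ≥0∞ × ℝ≥0∞) : Prop := d'.1 ≤ d.1 ∧ d.2 ≤ d'.2

/-- `d ⊏ d'` iff `d ⊑ d'` and `d ≠ d'`. -/
def slt (d d' : ℝ≥0∞ × ℝ≥0∞) : Prop := sqle d d' ∧ d ≠ d'

/-- The Pareto front `PF(I) = {d ∈ I : ∀ d' ∈ I, ¬(d' ⊏ d)}`. -/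
def PF (I : Set (ℝ≥0∞ × ℝ≥0∞)) : Set (ℝ≥0∞ × ℝ≥0∞) :=
  {d ∈ I | ∀ d' ∈ I, ¬ slt d' d}

/-- `Ψ_A(I₁,I₂,c) = I₁ ∪ {(p₂, c₂ + c) : (p₂,c₂) ∈ I₂}`. -/
def PsiA (I₁ I₂ : Set (ℝ≥0∞ × ℝ≥0∞)) (c : ℝ≥0∞) : Set (ℝ≥0∞ × ℝ≥0∞) :=
  I₁ ∪ {d | ∃ d₂ ∈ I₂, d = (d₂.1, d₂.2 + c)}

/-!
Every point of a finite set is `⊑`-above a point of its Pareto front, and a subset `J ⊆ I`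
that has a point `⊑`-below each point of `I` has the same Pareto front as `I`. Shifting costs
by `c` is monotone for `⊑`, so replacing `I₁` or `I₂` by its Pareto front yields such a subset
of `Ψ_A(I₁,I₂,c)`.
-/

lemma sqle_refl (d : ℝ≥0∞ × ℝ≥0∞) : sqle d d := ⟨le_rfl, le_rfl⟩

lemma sqle_trans {a b d : ℝ≥0∞ × ℝ≥0∞} (hab : sqle a b) (hbd : sqle b d) : sqle a d :=
  ⟨hbd.1.trans hab.1, hab.2.trans hbd.2⟩

lemma sqle_antisymm {a b : ℝ≥0∞ × ℝ≥0∞} (hab : sqle a b) (hba : sqle b a) : a = b :=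
  Prod.ext (le_antisymm hba.1 hab.1) (le_antisymm hab.2 hba.2)

def Dominates (J I : Set (ℝ≥0∞ × ℝ≥0∞)) : Prop := ∀ x ∈ I, ∃ y ∈ J, sqle y x

lemma Dominates.refl (I : Set (ℝ≥0∞ × ℝ≥0∞)) : Dominates I I :=
  fun x hx => ⟨x, hx, sqle_refl x⟩

lemma PF_subset (I : Set (ℝ≥0∞ × ℝ≥0∞)) : PF I ⊆ I := fun _ hd => hd.1

lemma exists_mem_PF_sqle {I : Set (ℝ≥0∞ × ℝ≥0∞)} (hI : I.Finite) {d : ℝ≥0∞ × ℝ≥0∞}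
    (hd : d ∈ I) : ∃ m ∈ PF I, sqle m d := by
  -- `⊑` is the product order on `ℝ≥0∞ᵒᵈ × ℝ≥0∞`, pulled back along `d ↦ (toDual d.1, d.2)`.
  obtain ⟨m, ⟨hmI, hmd⟩, hmin⟩ :=
    (hI.subset fun y (hy : y ∈ I ∧ sqle y d) => hy.1).exists_minimalFor
      (fun y => (OrderDual.toDual y.1, y.2)) {y | y ∈ I ∧ sqle y d} ⟨d, hd, sqle_refl d⟩
  refine ⟨m, ⟨hmI, fun x hx hxm => hxm.2 ?_⟩, hmd⟩
  exact sqle_antisymm hxm.1 (hmin ⟨hx, sqle_trans hxm.1 hmd⟩ hxm.1)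

lemma dominates_PF {I : Set (ℝ≥0∞ × ℝ≥0∞)} (hI : I.Finite) : Dominates (PF I) I :=
  fun _ hd => exists_mem_PF_sqle hI hd

lemma PF_eq_of_subset_of_dominates {I J : Set (ℝ≥0∞ × ℝ≥0∞)} (hJI : J ⊆ I)
    (hdom : Dominates J I) : PF I = PF J := by
  ext d
  constructor
  · rintro ⟨hdI, hmin⟩
    obtain ⟨y, hyJ, hyd⟩ := hdom d hdI
    obtain rfl : y = d := by_contra fun hne => hmin y (hJI hyJ) ⟨hyd, hne⟩
    exact ⟨hyJ, fun x hx => hmin x (hJI hx)⟩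
  · rintro ⟨hdJ, hmin⟩
    refine ⟨hJI hdJ, fun x hx hxd => ?_⟩
    obtain ⟨y, hyJ, hyx⟩ := hdom x hx
    by_cases hyd : y = d
    · subst hyd
      exact hxd.2 (sqle_antisymm hxd.1 hyx)
    · exact hmin y hyJ ⟨sqle_trans hyx hxd.1, hyd⟩

lemma PsiA_mono {I₁ I₂ J₁ J₂ : Set (ℝ≥0∞ × ℝ≥0∞)} (h₁ : J₁ ⊆ I₁) (h₂ : J₂ ⊆ I₂)
    (c : ℝ≥0∞) : PsiA J₁ J₂ c ⊆ PsiA I₁ I₂ c := by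
  rintro x (hx | ⟨d₂, hd₂, rfl⟩)
  · exact Or.inl (h₁ hx)
  · exact Or.inr ⟨d₂, h₂ hd₂, rfl⟩

lemma Dominates.PsiA {I₁ I₂ J₁ J₂ : Set (ℝ≥0∞ × ℝ≥0∞)} (h₁ : Dominates J₁ I₁)
    (h₂ : Dominates J₂ I₂) (c : ℝ≥0∞) : Dominates (PsiA J₁ J₂ c) (PsiA I₁ I₂ c) := by
  rintro x (hx | ⟨d₂, hd₂, rfl⟩)
  · obtain ⟨y, hy, hyx⟩ := h₁ x hx
    exact ⟨y, Or.inl hy, hyx⟩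
  · obtain ⟨y, hy, hyd⟩ := h₂ d₂ hd₂
    exact ⟨(y.1, y.2 + c), Or.inr ⟨y, hy, rfl⟩, hyd.1, add_le_add_left hyd.2 c⟩

lemma PF_PsiA_eq_of_subset_of_dominates {I₁ I₂ J₁ J₂ : Set (ℝ≥0∞ × ℝ≥0∞)}
    (hJ₁ : J₁ ⊆ I₁) (hJ₂ : J₂ ⊆ I₂) (h₁ : Dominates J₁ I₁) (h₂ : Dominates J₂ I₂)
    (c : ℝ≥0∞) : PF (PsiA I₁ I₂ c) = PF (PsiA J₁ J₂ c) :=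
  PF_eq_of_subset_of_dominates (PsiA_mono hJ₁ hJ₂ c) (h₁.PsiA h₂ c)

theorem pf_psiA_pf_general (I₁ I₂ : Set (ℝ≥0∞ × ℝ≥0∞)) (hI₁ : I₁.Finite) (hI₂ : I₂.Finite)
    (c : ℝ≥0∞) :
    PF (PsiA I₁ I₂ c) = PF (PsiA (PF I₁) I₂ c) ∧
      PF (PsiA I₁ I₂ c) = PF (PsiA I₁ (PF I₂) c) :=
  ⟨PF_PsiA_eq_of_subset_of_dominates (PF_subset I₁) subset_rfl (dominates_PF hI₁)
      (Dominates.refl I₂) c,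
    PF_PsiA_eq_of_subset_of_dominates subset_rfl (PF_subset I₂) (Dominates.refl I₁)
      (dominates_PF hI₂) c⟩

/-- `PF(Ψ_A(I₁,I₂,c)) = PF(Ψ_A(PF(I₁),I₂,c)) = PF(Ψ_A(I₁,PF(I₂),c))`. -/
theorem pf_psiA_pf (I₁ I₂ : Set (ℝ≥0∞ × ℝ≥0∞)) (hI₁ : I₁.Finite) (hI₂ : I₂.Finite)
    (hI₁D : I₁ ⊆ Dom) (hI₂D : I₂ ⊆ Dom) (c : ℝ≥0∞) :
    PF (PsiA I₁ I₂ c) = PF (PsiA (PF I₁) I₂ c) ∧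
      PF (PsiA I₁ I₂ c) = PF (PsiA I₁ (PF I₂) c) :=
  pf_psiA_pf_general I₁ I₂ hI₁ hI₂ c
end

section
/- Let (Λ, π, γ) be a quantified scenario such that some a ∈ A is minimal in F ∪ A with respect to ≺_Q, i.e. Q_a = ∅, and let Λ^{a/0}, Λ^{a/1} be the reduced quantified scenarios obtained by substituting 0 (resp. 1) for the a-variable of φ and removing a. Then τ_e(Σ_Λ) = Ψ_A(τ_e(Σ_{Λ^{a/0}}), τ_e(Σ_{Λ^{a/1}}), γ_a), where Ψ_A(I₁,I₂,c) = I₁ ∪ {(p₂, c₂ + c) : (p₂,c₂) ∈ I₂}. -/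
open scoped ENNReal

/-- A scenario `(F, A, φ, Q)`: `φ : 𝔹^F × 𝔹^A → 𝔹` is a Boolean function, and
`Q` assigns to each attack `a ∈ A` the subset `Q_a ⊆ F` of failures observable when
deciding about `a`; the family `{Q_a}` is totally ordered by inclusion. -/
structure Scenario (F A : Type) where
  φ : (F → Bool) → (A → Bool) → Bool
  Q : A → Finset F
  chain : ∀ a a' : A, Q a ⊆ Q a' ∨ Q a' ⊆ Q a

variable {F A : Type}

/-- A strategy: for each `a ∈ A`, a map `σ_a : 𝔹^{Q_a} → 𝔹`. -/
def Strategy (Λ : Scenario F A) : Type :=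
  (a : A) → ({f : F // f ∈ Λ.Q a} → Bool) → Bool

/-- The induced map `σ̂ : 𝔹^F → 𝔹^A`, `σ̂(x)_a = σ_a(x|_{Q_a})`. -/
def hatS (Λ : Scenario F A) (σ : Strategy Λ) (x : F → Bool) : A → Bool :=
  fun a => σ a fun f => x f.1

/-- The reduced scenario `Λ^{a/b}`: substitute `b` for the `a`-variable of `φ`
and remove `a` from `A`. -/
def Scenario.reduceA [DecidableEq A] (Λ : Scenario F A) (a : A) (b : Bool) :
    Scenario F {a' : A // a' ≠ a} where
  φ := fun x y => Λ.φ x (fun a' => if h : a' = a then b else y ⟨a', h⟩)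
  Q := fun a' => Λ.Q a'.1
  chain := fun a' a'' => Λ.chain a'.1 a''.1

/-- The lifted strategy `ι(σ)`: set `σ_a` identically equal to `b` and leave `σ_{a'}`
unchanged for `a' ≠ a`. -/
def iota [DecidableEq A] (Λ : Scenario F A) (a : A) (b : Bool)
    (σ : Strategy (Λ.reduceA a b)) : Strategy Λ :=
  fun a' x => if h : a' = a then b else σ ⟨a', h⟩ x

/-- Bernoulli weight of an outcome `x ∈ 𝔹^F`:
`(∏_{f : x_f = 1} π_f) · (∏_{f : x_f = 0} (1 - π_f))`. -/
noncomputable def wght [Fintype F] (π : F → ℝ≥0∞) (x : F → Bool) : ℝ≥0∞ :=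
  ∏ f, if x f then π f else 1 - π f

/-- Success probability `π̂(σ)`: the probability that `φ(x, σ̂(x)) = 1` when the
coordinates `x_f` are independent Bernoulli(`π_f`). -/
noncomputable def probS [Fintype F] [DecidableEq F] (Λ : Scenario F A)
    (π : F → ℝ≥0∞) (σ : Strategy Λ) : ℝ≥0∞ :=
  ∑ x : F → Bool, wght π x * (if Λ.φ x (hatS Λ σ x) then 1 else 0)

/-- Cost incurred by strategy `σ` upon observing `x`: `Σ_{a : σ̂(x)_a = 1} γ_a`. -/
noncomputable def costOf [Fintype A] (Λ : Scenario F A) (γ : A → ℝ≥0∞) (σ : Strategy Λ)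
    (x : F → Bool) : ℝ≥0∞ :=
  ∑ a, if hatS Λ σ x a then γ a else 0

/-- Maximal cost `γ̂_m(σ) = max_{x ∈ 𝔹^F} Σ_{a : σ̂(x)_a = 1} γ_a`. -/
noncomputable def maxCost [Fintype F] [DecidableEq F] [Fintype A] (Λ : Scenario F A)
    (γ : A → ℝ≥0∞) (σ : Strategy Λ) : ℝ≥0∞ :=
  ⨆ x : F → Bool, costOf Λ γ σ x

/-- Expected cost `γ̂_e(σ)`. -/
noncomputable def expCost [Fintype F] [DecidableEq F] [Fintype A] (Λ : Scenario F A)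
    (π : F → ℝ≥0∞) (γ : A → ℝ≥0∞) (σ : Strategy Λ) : ℝ≥0∞ :=
  ∑ x : F → Bool, wght π x * costOf Λ γ σ x

/-! Since `Q_a = ∅`, the decision `σ_a` of any strategy is a constant `b`, so every strategy is
`iota Λ a b σ'` for a strategy `σ'` of `Λ^{a/b}`. Lifting along `iota` keeps the success
probability and adds `b · γ_a` to the expected cost, because the Bernoulli weights sum to `1`. -/

theorem sum_wght_eq_one [Fintype F] [DecidableEq F] {π : F → ℝ≥0∞} (hπ : ∀ f, π f ≤ 1) :
    ∑ x : F → Bool, wght π x = 1 :=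
  calc ∑ x : F → Bool, wght π x
      = ∏ f, ∑ b : Bool, if b then π f else 1 - π f :=
        (Fintype.prod_sum fun f (b : Bool) => if b then π f else 1 - π f).symm
    _ = 1 := Finset.prod_eq_one fun f _ => by simp [add_tsub_cancel_of_le (hπ f)]

section Reduction

variable [DecidableEq A] (Λ : Scenario F A) (a : A)

theorem costOf_iota [Fintype A] (γ : A → ℝ≥0∞) (b : Bool) (σ : Strategy (Λ.reduceA a b))
    (x : F → Bool) :
    costOf Λ γ (iota Λ a b σ) x =
      costOf (Λ.reduceA a b) (fun a' => γ a'.1) σ x + if b then γ a else 0 := by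
  rw [costOf, Fintype.sum_eq_add_sum_subtype_ne _ a, add_comm]
  congr 1
  · exact Fintype.sum_congr _ _ fun a' => by simp only [hatS, iota, dif_neg a'.2]; rfl
  · simp [hatS, iota]

theorem probS_iota [Fintype F] [DecidableEq F] (π : F → ℝ≥0∞) (b : Bool)
    (σ : Strategy (Λ.reduceA a b)) :
    probS Λ π (iota Λ a b σ) = probS (Λ.reduceA a b) π σ := rfl

theorem expCost_iota [Fintype F] [DecidableEq F] [Fintype A] {π : F → ℝ≥0∞}
    (hπ : ∀ f, π f ≤ 1) (γ : A → ℝ≥0∞) (b : Bool) (σ : Strategy (Λ.reduceA a b)) :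
    expCost Λ π γ (iota Λ a b σ) =
      expCost (Λ.reduceA a b) π (fun a' => γ a'.1) σ + if b then γ a else 0 := by
  simp only [expCost, costOf_iota, mul_add, Finset.sum_add_distrib, ← Finset.sum_mul,
    sum_wght_eq_one hπ, one_mul]

theorem exists_eq_iota_of_Q_eq_empty (hQa : Λ.Q a = ∅) (σ : Strategy Λ) :
    ∃ b σ', σ = iota Λ a b σ' := by
  have : IsEmpty {f // f ∈ Λ.Q a} := ⟨fun f => by simpa [hQa] using f.2⟩
  refine ⟨σ a isEmptyElim, fun a' => σ a'.1, ?_⟩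
  funext a' t
  by_cases h : a' = a
  · subst h
    simp [iota, Subsingleton.elim t isEmptyElim]
  · simp [iota, h]

theorem range_eq_range_iota_union_range_iota (hQa : Λ.Q a = ∅) {α : Type*}
    (g : Strategy Λ → α) :
    Set.range g = Set.range (fun σ => g (iota Λ a false σ)) ∪
      Set.range (fun σ => g (iota Λ a true σ)) := by
  ext d
  constructor
  · rintro ⟨σ, rfl⟩
    obtain ⟨b, σ', rfl⟩ := exists_eq_iota_of_Q_eq_empty Λ a hQa σ
    cases b
    exacts [Or.inl ⟨σ', rfl⟩, Or.inr ⟨σ', rfl⟩]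
  · rintro (⟨σ, rfl⟩ | ⟨σ, rfl⟩) <;> exact ⟨_, rfl⟩

end Reduction

/-- `τ_e(Σ_Λ) = Ψ_A(τ_e(Σ_{Λ^{a/0}}), τ_e(Σ_{Λ^{a/1}}), γ_a)`. -/
theorem range_tauE_eq_psiA [Fintype F] [Fintype A] [DecidableEq F] [DecidableEq A]
    (Λ : Scenario F A) (π : F → ℝ≥0∞) (hπ : ∀ g, π g ≤ 1) (γ : A → ℝ≥0∞)
    (a : A) (hQa : Λ.Q a = ∅) :
    Set.range (fun σ : Strategy Λ => (probS Λ π σ, expCost Λ π γ σ)) =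
      PsiA
        (Set.range (fun σ0 : Strategy (Λ.reduceA a false) =>
          (probS (Λ.reduceA a false) π σ0,
            expCost (Λ.reduceA a false) π (fun a' => γ a'.1) σ0)))
        (Set.range (fun σ1 : Strategy (Λ.reduceA a true) =>
          (probS (Λ.reduceA a true) π σ1,
            expCost (Λ.reduceA a true) π (fun a' => γ a'.1) σ1)))
        (γ a) := by
  rw [range_eq_range_iota_union_range_iota Λ a hQa, PsiA]
  simp only [probS_iota, expCost_iota Λ a hπ, Bool.false_eq_true, if_false, add_zero, if_true]
  congr 1
  ext d
  simp [eq_comm]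
end

section
/- Let (Λ, π, γ) be a quantified scenario with all costs γ_a finite, such that some f ∈ F is minimal in F ∪ A with respect to ≺_Q (i.e. f ∈ Q_a for all a ∈ A), and let Λ^{f/0}, Λ^{f/1} be the reduced quantified scenarios obtained by substituting 0 (resp. 1) for the f-variable of φ and removing f. Then the probability–expected-cost Pareto front satisfies the recursion PEC(Λ̂) = SCPF(Ψ_F^e(PEC(Λ̂^{f/0}), PEC(Λ̂^{f/1}), π_f)), where Ψ_F^e(I₁,I₂,p) = {((1−p)·p₁ + p·p₂, (1−p)·c₁ + p·c₂) : (p₁,c₁) ∈ I₁, (p₂,c₂) ∈ I₂}. -/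
variable {F A : Type}

/-- The reduced scenario `Λ^{f/b}`: substitute `b` for the `f`-variable of `φ`,
remove `f` from `F`, and set `Q'_a = Q_a \ {f}`. -/
def Scenario.reduceF [DecidableEq F] (Λ : Scenario F A) (f : F) (b : Bool) :
    Scenario {g : F // g ≠ f} A where
  φ := fun x y => Λ.φ (fun g => if h : g = f then b else x ⟨g, h⟩) y
  Q := fun a => (Λ.Q a).subtype (· ≠ f)
  chain := fun a a' => (Λ.chain a a').imp
    (fun h x hx => Finset.mem_subtype.mpr (h (Finset.mem_subtype.mp hx)))
    (fun h x hx => Finset.mem_subtype.mpr (h (Finset.mem_subtype.mp hx)))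

/-- Restriction of `x ∈ 𝔹^{Q_a}` to `𝔹^{Q_a \ {f}}` (the `x'` of the paper). -/
def restr [DecidableEq F] (Λ : Scenario F A) (f : F) (b : Bool) (a : A)
    (x : {f' : F // f' ∈ Λ.Q a} → Bool) :
    ({g // g ∈ (Λ.reduceF f b).Q a} → Bool) :=
  fun g => x ⟨g.1.1, Finset.mem_subtype.mp g.2⟩

/-- The composed strategy `σ⁰ ⋆ σ¹`, defined by
`(σ⁰ ⋆ σ¹)_a(x) = (¬x_f ∧ σ⁰_a(x')) ∨ (x_f ∧ σ¹_a(x'))`. -/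
def star [DecidableEq F] (Λ : Scenario F A) (f : F) (hf : ∀ a, f ∈ Λ.Q a)
    (σ0 : Strategy (Λ.reduceF f false)) (σ1 : Strategy (Λ.reduceF f true)) :
    Strategy Λ := fun a x =>
  (!(x ⟨f, hf a⟩) && σ0 a (restr Λ f false a x)) ||
    ((x ⟨f, hf a⟩) && σ1 a (restr Λ f true a x))

/-- Bernoulli weight of an outcome `x ∈ 𝔹^F` (real-valued). -/
noncomputable def wghtR [Fintype F] (π : F → ℝ) (x : F → Bool) : ℝ :=
  ∏ f, if x f then π f else 1 - π f

/-- Success probability `π̂(σ)` (real-valued). -/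
noncomputable def probR [Fintype F] [DecidableEq F] (Λ : Scenario F A)
    (π : F → ℝ) (σ : Strategy Λ) : ℝ :=
  ∑ x : F → Bool, wghtR π x * (if Λ.φ x (hatS Λ σ x) then 1 else 0)

/-- Expected cost `γ̂_e(σ)` (real-valued, costs finite). -/
noncomputable def expCostR [Fintype F] [DecidableEq F] [Fintype A] (Λ : Scenario F A)
    (π : F → ℝ) (γ : A → ℝ) (σ : Strategy Λ) : ℝ :=
  ∑ x : F → Bool, wghtR π x * ∑ a, if hatS Λ σ x a then γ a else 0

/-- `(p,c) ⊑ (p',c')` iff `p ≥ p'` and `c ≤ c'` (on `D = [0,1] × [0,∞) ⊆ ℝ²`). -/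
def sqleR (d d' : ℝ × ℝ) : Prop := d'.1 ≤ d.1 ∧ d.2 ≤ d'.2

/-- `d ⊏ d'` iff `d ⊑ d'` and `d ≠ d'`. -/
def sltR (d d' : ℝ × ℝ) : Prop := sqleR d d' ∧ d ≠ d'

/-- The line segment `ℓ(d₁,d₂) = {t·d₁ + (1−t)·d₂ : t ∈ [0,1]}` in `ℝ²`. -/
def seg (d₁ d₂ : ℝ × ℝ) : Set (ℝ × ℝ) :=
  {d | ∃ t ∈ Set.Icc (0 : ℝ) 1, d = t • d₁ + (1 - t) • d₂}

/-- The strictly convex Pareto front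
`SCPF(I) = {d ∈ I : ∀ d₁ d₂ ∈ I, ∀ d' ∈ ℓ(d₁,d₂), ¬(d' ⊏ d)}`. -/
def SCPF (I : Set (ℝ × ℝ)) : Set (ℝ × ℝ) :=
  {d ∈ I | ∀ d₁ ∈ I, ∀ d₂ ∈ I, ∀ d' ∈ seg d₁ d₂, ¬ sltR d' d}

/-- `Ψ_F^e(I₁,I₂,p)` (real-valued). -/
def PsiFeR (I₁ I₂ : Set (ℝ × ℝ)) (p : ℝ) : Set (ℝ × ℝ) :=
  {d | ∃ d₁ ∈ I₁, ∃ d₂ ∈ I₂, d = ((1 - p) * d₁.1 + p * d₂.1, (1 - p) * d₁.2 + p * d₂.2)}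

/-!
Conditioning on the variable `f`, which every decision observes, writes each strategy as
`σ⁰ ⋆ σ¹`, and `τ_e(σ⁰ ⋆ σ¹) = (1 - π_f) τ_e(σ⁰) + π_f τ_e(σ¹)`; so `τ_e(Σ_Λ)` is the mixture
`Ψ(τ_e(Σ_{Λ^{f/0}}), τ_e(Σ_{Λ^{f/1}}), π_f)` and it remains to show
`SCPF (Ψ(I₁, I₂, p)) = SCPF (Ψ(SCPF I₁, SCPF I₂, p))` for finite `I₁`, `I₂`.

In the plane, a point dominated by a convex combination of points of `I` is already dominated
by a point on a segment between two of them: inside a triangle, move horizontally towards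
larger first coordinate until a barycentric weight vanishes. Hence `SCPF I` is the set of
points of `I` not strictly dominated by `conv I`. For finite `I`, every point of `I` is weakly
dominated by `conv (SCPF I)` (remove non-front points one at a time), and mixing these
dominations through `Ψ` gives both inclusions.
-/

theorem sqleR.refl (d : ℝ × ℝ) : sqleR d d := ⟨le_rfl, le_rfl⟩

theorem sqleR.trans {a b c : ℝ × ℝ} (hab : sqleR a b) (hbc : sqleR b c) : sqleR a c :=
  ⟨hbc.1.trans hab.1, hab.2.trans hbc.2⟩

theorem sqleR.trans_sltR {a b c : ℝ × ℝ} (hab : sqleR a b) (hbc : sltR b c) : sltR a c :=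
  ⟨hab.trans hbc.1, by
    rintro rfl
    exact hbc.2 (Prod.ext (le_antisymm hab.1 hbc.1.1) (le_antisymm hbc.1.2 hab.2))⟩

theorem sqleR.smul_add_smul {x x' y y' : ℝ × ℝ} {a b : ℝ} (ha : 0 ≤ a) (hb : 0 ≤ b)
    (hx : sqleR x x') (hy : sqleR y y') : sqleR (a • x + b • y) (a • x' + b • y') := by
  obtain ⟨hx₁, hx₂⟩ := hx
  obtain ⟨hy₁, hy₂⟩ := hy
  constructor <;> simp only [Prod.fst_add, Prod.snd_add, Prod.smul_fst, Prod.smul_snd,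
    smul_eq_mul] <;> gcongr

theorem sltR.smul_add {x y : ℝ × ℝ} (w : ℝ × ℝ) {c : ℝ} (hc : 0 < c) (h : sltR x y) :
    sltR (c • x + w) (c • y + w) := by
  obtain ⟨⟨h₁, h₂⟩, hne⟩ := h
  refine ⟨⟨?_, ?_⟩, fun heq => hne (smul_right_injective _ hc.ne' (add_right_cancel heq))⟩ <;>
    simp only [Prod.fst_add, Prod.snd_add, Prod.smul_fst, Prod.smul_snd, smul_eq_mul] <;> gcongr

theorem sqleR_of_mem_segment_of_sltR {x y z : ℝ × ℝ} (hz : z ∈ segment ℝ x y)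
    (hzx : sltR z x) : sqleR y x := by
  obtain ⟨a, b, ha, hb, hab, rfl⟩ := hz
  obtain ⟨⟨h₁, h₂⟩, hne⟩ := hzx
  simp only [Prod.fst_add, Prod.snd_add, Prod.smul_fst, Prod.smul_snd, smul_eq_mul] at h₁ h₂
  obtain rfl : a = 1 - b := by linarith
  rcases hb.eq_or_lt with rfl | hb
  · exact absurd (by simp) hne
  · constructor <;> nlinarith

theorem seg_eq_segment (d₁ d₂ : ℝ × ℝ) : seg d₁ d₂ = segment ℝ d₁ d₂ := by
  rw [segment_symm, segment_eq_image]
  ext d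
  simp only [seg, Set.mem_ofPred_eq, Set.mem_image]
  constructor
  · rintro ⟨t, ht, rfl⟩; exact ⟨t, ht, add_comm _ _⟩
  · rintro ⟨t, ht, rfl⟩; exact ⟨t, ht, add_comm _ _⟩

theorem SCPF_eq_segment (I : Set (ℝ × ℝ)) :
    SCPF I = {d ∈ I | ∀ d₁ ∈ I, ∀ d₂ ∈ I, ∀ d' ∈ segment ℝ d₁ d₂, ¬ sltR d' d} := by
  simp only [SCPF, seg_eq_segment]

theorem exists_ne_zero_sum_eq_zero_sum_mul_eq_zero (h : Fin 3 → ℝ) :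
    ∃ r : Fin 3 → ℝ, r ≠ 0 ∧ ∑ i, r i = 0 ∧ ∑ i, r i * h i = 0 := by
  by_cases h01 : h 0 = h 1
  · refine ⟨![1, -1, 0], fun h0 => by simpa using congrFun h0 0, ?_, ?_⟩ <;>
      simp [Fin.sum_univ_three, h01]
  · refine ⟨![h 1 - h 2, h 2 - h 0, h 0 - h 1], fun h0 => ?_, ?_, ?_⟩
    · exact h01 (sub_eq_zero.1 (by simpa using congrFun h0 2))
    all_goals simp only [Fin.sum_univ_three, Matrix.cons_val]; ring

theorem exists_neg_of_sum_eq_zero {ι : Type*} [Fintype ι] {r : ι → ℝ} (hr : r ≠ 0)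
    (hsum : ∑ i, r i = 0) : ∃ i, r i < 0 := by
  by_contra! hnonneg
  exact hr (funext ((Fintype.sum_eq_zero_iff_of_nonneg hnonneg).1 hsum |> congrFun))

/-- The ratio test of the simplex method: move from `w` along `r` until a weight vanishes. -/
theorem exists_nonneg_add_smul_eq_zero {ι : Type*} [Fintype ι] {w r : ι → ℝ} (hw : 0 ≤ w)
    (hr : ∃ i, r i < 0) : ∃ U : ℝ, 0 ≤ U ∧ 0 ≤ w + U • r ∧ ∃ i, w i + U * r i = 0 := by
  obtain ⟨i₀, hi₀, hmin⟩ := Finset.exists_min_image (Finset.univ.filter (r · < 0))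
    (fun i => w i / -r i) (by obtain ⟨i, hi⟩ := hr; exact ⟨i, by simpa using hi⟩)
  have hri₀ : 0 < -r i₀ := neg_pos.2 (Finset.mem_filter.1 hi₀).2
  refine ⟨w i₀ / -r i₀, div_nonneg (hw i₀) hri₀.le, fun j => ?_, i₀, ?_⟩
  · simp only [Pi.zero_apply, Pi.add_apply, Pi.smul_apply, smul_eq_mul]
    rcases lt_or_ge (r j) 0 with hrj | hrj
    · have := (le_div_iff₀ (neg_pos.2 hrj)).1 (hmin j (by simp [hrj]))
      linarith
    · exact add_nonneg (hw j) (mul_nonneg (div_nonneg (hw i₀) hri₀.le) hrj)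
  · rw [div_mul_eq_mul_div, div_neg, mul_div_cancel_right₀ _ (neg_pos.1 hri₀).ne]
    ring

theorem sum_smul_mem_segment_of_eq_zero {E : Type*} [AddCommGroup E] [Module ℝ E]
    (x : Fin 3 → E) {w : Fin 3 → ℝ} (hw : 0 ≤ w) (hsum : ∑ i, w i = 1) {i₀ : Fin 3}
    (hi₀ : w i₀ = 0) : ∃ i j, ∑ k, w k • x k ∈ segment ℝ (x i) (x j) := by
  rw [Fin.sum_univ_three] at hsum ⊢
  fin_cases i₀ <;> simp only [Fin.zero_eta, Fin.mk_one, Fin.reduceFinMk] at hi₀ <;>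
    simp only [hi₀, zero_smul, zero_add, add_zero, zero_add] at hsum ⊢
  · exact ⟨1, 2, w 1, w 2, hw 1, hw 2, hsum, rfl⟩
  · exact ⟨0, 2, w 0, w 2, hw 0, hw 2, hsum, rfl⟩
  · exact ⟨0, 1, w 0, w 1, hw 0, hw 1, hsum, rfl⟩

theorem exists_mem_segment_sqleR_of_three (x : Fin 3 → ℝ × ℝ) {a : Fin 3 → ℝ} (ha : 0 ≤ a)
    (hsum : ∑ i, a i = 1) : ∃ i j, ∃ q ∈ segment ℝ (x i) (x j), sqleR q (∑ i, a i • x i) := by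
  obtain ⟨r, hr0, hrsum, hr₂⟩ := exists_ne_zero_sum_eq_zero_sum_mul_eq_zero fun i => (x i).2
  obtain ⟨r, hr0, hrsum, hr₂, hr₁⟩ : ∃ r : Fin 3 → ℝ, r ≠ 0 ∧ ∑ i, r i = 0 ∧
      ∑ i, r i * (x i).2 = 0 ∧ 0 ≤ ∑ i, r i * (x i).1 := by
    rcases le_total 0 (∑ i, r i * (x i).1) with h | h
    · exact ⟨r, hr0, hrsum, hr₂, h⟩
    · refine ⟨-r, neg_ne_zero.2 hr0, ?_, ?_, ?_⟩ <;>
        simp only [Pi.neg_apply, neg_mul, Finset.sum_neg_distrib] <;> linarith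
  obtain ⟨U, hU, hw, i₀, hi₀⟩ := exists_nonneg_add_smul_eq_zero ha
    (exists_neg_of_sum_eq_zero hr0 hrsum)
  have hwsum : ∑ i, (a + U • r) i = 1 := by
    simp [Finset.sum_add_distrib, ← Finset.mul_sum, hsum, hrsum]
  obtain ⟨i, j, hq⟩ := sum_smul_mem_segment_of_eq_zero x hw hwsum hi₀
  refine ⟨i, j, _, hq, ?_, ?_⟩ <;>
    simp only [Prod.fst_sum, Prod.snd_sum, Prod.smul_fst, Prod.smul_snd, smul_eq_mul,
      Pi.add_apply, Pi.smul_apply, add_mul, mul_assoc, Finset.sum_add_distrib, ← Finset.mul_sum]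
  · nlinarith
  · rw [hr₂, mul_zero, add_zero]

theorem exists_mem_segment_sqleR_of_mem_convexHull_finset (t : Finset (ℝ × ℝ)) :
    ∀ z ∈ convexHull ℝ (t : Set (ℝ × ℝ)),
      ∃ u ∈ t, ∃ v ∈ t, ∃ q ∈ segment ℝ u v, sqleR q z := by
  induction t using Finset.induction_on with
  | empty => simp
  | @insert x s _ ih =>
    intro z hz
    rcases s.eq_empty_or_nonempty with rfl | hs
    · obtain rfl : z = x := by simpa using hz
      exact ⟨z, by simp, z, by simp, z, left_mem_segment ℝ z z, sqleR.refl z⟩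
    rw [Finset.coe_insert, convexHull_insert (by exact_mod_cast hs), mem_convexJoin] at hz
    obtain ⟨x', hx', y, hy, α, β, hα, hβ, hαβ, rfl⟩ := hz
    subst x'
    obtain ⟨u, hu, v, hv, q, ⟨μ, ν, hμ, hν, hμν, rfl⟩, hqy⟩ := ih y hy
    obtain ⟨i, j, q', hq', hq'z⟩ := exists_mem_segment_sqleR_of_three ![x, u, v]
      (a := ![α, β * μ, β * ν]) (fun k => by fin_cases k <;> simp <;> positivity)
      (by simp [Fin.sum_univ_three]; linear_combination hαβ + β * hμν)
    have hmem : ∀ k, ![x, u, v] k ∈ insert x s := fun k => by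
      fin_cases k <;> simp [hu, hv]
    refine ⟨_, hmem i, _, hmem j, q', hq', hq'z.trans ?_⟩
    have := (sqleR.refl x).smul_add_smul hα hβ hqy
    simpa [Fin.sum_univ_three, smul_add, smul_smul, add_assoc] using this

theorem exists_mem_segment_sqleR_of_mem_convexHull {X : Set (ℝ × ℝ)} {z : ℝ × ℝ}
    (hz : z ∈ convexHull ℝ X) : ∃ u ∈ X, ∃ v ∈ X, ∃ q ∈ segment ℝ u v, sqleR q z := by
  rw [convexHull_eq_union_convexHull_finite_subsets, Set.mem_iUnion₂] at hz
  obtain ⟨t, htX, hz⟩ := hz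
  obtain ⟨u, hu, v, hv, hq⟩ := exists_mem_segment_sqleR_of_mem_convexHull_finset t z hz
  exact ⟨u, htX hu, v, htX hv, hq⟩

theorem mem_SCPF_iff {I : Set (ℝ × ℝ)} {d : ℝ × ℝ} :
    d ∈ SCPF I ↔ d ∈ I ∧ ∀ z ∈ convexHull ℝ I, ¬ sltR z d := by
  rw [SCPF_eq_segment]
  refine ⟨fun ⟨hd, hseg⟩ => ⟨hd, fun z hz hzd => ?_⟩, fun ⟨hd, hhull⟩ => ⟨hd, ?_⟩⟩
  · obtain ⟨u, hu, v, hv, q, hq, hqz⟩ := exists_mem_segment_sqleR_of_mem_convexHull hz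
    exact hseg u hu v hv q hq (hqz.trans_sltR hzd)
  · exact fun u hu v hv q hq => hhull q
      (segment_subset_convexHull hu hv hq)

def dominatedHull (S : Set (ℝ × ℝ)) : Set (ℝ × ℝ) :=
  {d | ∃ z ∈ convexHull ℝ S, sqleR z d}

theorem convex_dominatedHull (S : Set (ℝ × ℝ)) : Convex ℝ (dominatedHull S) := by
  rintro d ⟨z, hz, hzd⟩ d' ⟨z', hz', hzd'⟩ a b ha hb hab
  exact ⟨a • z + b • z', convex_convexHull ℝ S hz hz' ha hb hab, hzd.smul_add_smul ha hb hzd'⟩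

theorem convexHull_subset_dominatedHull (S : Set (ℝ × ℝ)) :
    convexHull ℝ S ⊆ dominatedHull S :=
  fun z hz => ⟨z, hz, sqleR.refl z⟩

theorem dominatedHull_mono {S T : Set (ℝ × ℝ)} (h : S ⊆ T) :
    dominatedHull S ⊆ dominatedHull T :=
  fun _ ⟨z, hz, hzd⟩ => ⟨z, convexHull_mono h hz, hzd⟩

theorem dominatedHull_subset {S T : Set (ℝ × ℝ)} (h : T ⊆ dominatedHull S) :
    dominatedHull T ⊆ dominatedHull S := by
  rintro d ⟨z, hz, hzd⟩
  obtain ⟨w, hw, hwz⟩ := convexHull_min h (convex_dominatedHull S) hz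
  exact ⟨w, hw, hwz.trans hzd⟩

theorem SCPF_subset_SCPF {S T : Set (ℝ × ℝ)} (hST : S ⊆ T) (hTS : T ⊆ dominatedHull S) :
    SCPF S ⊆ SCPF T := by
  intro d hd
  rw [mem_SCPF_iff] at hd ⊢
  refine ⟨hST hd.1, fun z hz hzd => ?_⟩
  obtain ⟨w, hw, hwz⟩ := convexHull_min hTS (convex_dominatedHull S) hz
  exact hd.2 w hw (hwz.trans_sltR hzd)

theorem mem_dominatedHull_diff_of_notMem_SCPF {I : Set (ℝ × ℝ)} {x : ℝ × ℝ} (hx : x ∈ I)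
    (hxI : x ∉ SCPF I) : x ∈ dominatedHull (I \ {x}) := by
  obtain ⟨z, hz, hzx⟩ : ∃ z ∈ convexHull ℝ I, sltR z x := by
    simpa [mem_SCPF_iff, hx] using hxI
  rw [← Set.insert_sdiff_self_of_mem hx] at hz
  rcases (I \ {x}).eq_empty_or_nonempty with he | hne
  · rw [he, insert_empty_eq, convexHull_singleton] at hz
    exact absurd hz hzx.2
  rw [convexHull_insert hne, mem_convexJoin] at hz
  obtain ⟨x', hx', y, hy, hzy⟩ := hz
  subst x'
  exact ⟨y, hy, sqleR_of_mem_segment_of_sltR hzy hzx⟩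

theorem subset_dominatedHull_SCPF_finset (t : Finset (ℝ × ℝ)) :
    (t : Set (ℝ × ℝ)) ⊆ dominatedHull (SCPF t) := by
  induction t using Finset.strongInduction with
  | H t ih =>
    by_cases hall : (t : Set (ℝ × ℝ)) ⊆ SCPF t
    · exact hall.trans ((subset_convexHull ℝ _).trans (convexHull_subset_dominatedHull _))
    obtain ⟨x, hx, hxt⟩ := Set.not_subset.1 hall
    have hx' : x ∈ dominatedHull ↑(t.erase x) := by
      rw [Finset.coe_erase]
      exact mem_dominatedHull_diff_of_notMem_SCPF hx hxt
    have ht : (t : Set (ℝ × ℝ)) ⊆ dominatedHull ↑(t.erase x) := by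
      intro y hy
      rcases eq_or_ne y x with rfl | hyx
      · exact hx'
      · exact convexHull_subset_dominatedHull _
          (subset_convexHull ℝ _ (Finset.mem_erase.2 ⟨hyx, hy⟩))
    have hSCPF := SCPF_subset_SCPF (Finset.coe_subset.2 (t.erase_subset x)) ht
    exact ht.trans ((dominatedHull_subset (ih _ (Finset.erase_ssubset hx))).trans
      (dominatedHull_mono hSCPF))

theorem Set.Finite.subset_dominatedHull_SCPF {I : Set (ℝ × ℝ)} (hI : I.Finite) :
    I ⊆ dominatedHull (SCPF I) := by
  obtain ⟨t, rfl⟩ := hI.exists_finset_coe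
  exact subset_dominatedHull_SCPF_finset t

theorem Set.Finite.SCPF_nonempty {I : Set (ℝ × ℝ)} (hI : I.Finite) (hne : I.Nonempty) :
    (SCPF I).Nonempty := by
  obtain ⟨d, hd⟩ := hne
  obtain ⟨z, hz, -⟩ := hI.subset_dominatedHull_SCPF hd
  exact convexHull_nonempty_iff.1 ⟨z, hz⟩

theorem mem_SCPF_of_subset {S T : Set (ℝ × ℝ)} {d : ℝ × ℝ} (hST : S ⊆ T) (hd : d ∈ SCPF T)
    (hdS : d ∈ S) : d ∈ SCPF S := by
  rw [mem_SCPF_iff] at hd ⊢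
  exact ⟨hdS, fun z hz => hd.2 z (convexHull_mono hST hz)⟩

section PsiFeR

open Pointwise

variable {I₁ I₂ : Set (ℝ × ℝ)} {p : ℝ}

theorem mem_PsiFeR {d : ℝ × ℝ} :
    d ∈ PsiFeR I₁ I₂ p ↔ ∃ d₁ ∈ I₁, ∃ d₂ ∈ I₂, (1 - p) • d₁ + p • d₂ = d := by
  simp only [PsiFeR, Set.mem_ofPred_eq, Prod.ext_iff, Prod.fst_add, Prod.snd_add,
    Prod.smul_fst, Prod.smul_snd, smul_eq_mul, eq_comm]

theorem PsiFeR_eq_add : PsiFeR I₁ I₂ p = (1 - p) • I₁ + p • I₂ := by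
  ext d
  simp only [mem_PsiFeR, Set.mem_add, Set.mem_smul_set]
  constructor
  · rintro ⟨d₁, h₁, d₂, h₂, rfl⟩
    exact ⟨_, ⟨d₁, h₁, rfl⟩, _, ⟨d₂, h₂, rfl⟩, rfl⟩
  · rintro ⟨_, ⟨d₁, h₁, rfl⟩, _, ⟨d₂, h₂, rfl⟩, rfl⟩
    exact ⟨d₁, h₁, d₂, h₂, rfl⟩

theorem PsiFeR_comm : PsiFeR I₁ I₂ p = PsiFeR I₂ I₁ (1 - p) := by
  rw [PsiFeR_eq_add, PsiFeR_eq_add, sub_sub_cancel, add_comm]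

theorem PsiFeR_mono {J₁ J₂ : Set (ℝ × ℝ)} (h₁ : I₁ ⊆ J₁) (h₂ : I₂ ⊆ J₂) :
    PsiFeR I₁ I₂ p ⊆ PsiFeR J₁ J₂ p := by
  rw [PsiFeR_eq_add, PsiFeR_eq_add]
  exact Set.add_subset_add (Set.smul_set_mono h₁) (Set.smul_set_mono h₂)

theorem convexHull_PsiFeR :
    convexHull ℝ (PsiFeR I₁ I₂ p) = PsiFeR (convexHull ℝ I₁) (convexHull ℝ I₂) p := by
  rw [PsiFeR_eq_add, PsiFeR_eq_add, convexHull_add, convexHull_smul, convexHull_smul]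

theorem mem_SCPF_of_smul_add_smul_mem_SCPF {d₁ d₂ : ℝ × ℝ} (hp : p < 1) (h₁ : d₁ ∈ I₁)
    (h₂ : d₂ ∈ I₂) (hd : (1 - p) • d₁ + p • d₂ ∈ SCPF (PsiFeR I₁ I₂ p)) : d₁ ∈ SCPF I₁ := by
  rw [mem_SCPF_iff] at hd ⊢
  refine ⟨h₁, fun z hz hzd => hd.2 ((1 - p) • z + p • d₂) ?_ (hzd.smul_add _ (by linarith))⟩
  rw [convexHull_PsiFeR, mem_PsiFeR]
  exact ⟨z, hz, d₂, subset_convexHull ℝ I₂ h₂, rfl⟩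

/-- When `p = 1` the first component carries no weight and can be replaced by any point. -/
theorem exists_mem_SCPF_smul_add_smul_eq_left {d₁ d₂ : ℝ × ℝ} (hp : p ≤ 1)
    (hne : (SCPF I₁).Nonempty) (h₁ : d₁ ∈ I₁) (h₂ : d₂ ∈ I₂)
    (hd : (1 - p) • d₁ + p • d₂ ∈ SCPF (PsiFeR I₁ I₂ p)) :
    ∃ e₁ ∈ SCPF I₁, (1 - p) • e₁ + p • d₂ = (1 - p) • d₁ + p • d₂ := by
  rcases hp.lt_or_eq with hp | rfl
  · exact ⟨d₁, mem_SCPF_of_smul_add_smul_mem_SCPF hp h₁ h₂ hd, rfl⟩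
  · obtain ⟨e₁, he₁⟩ := hne
    exact ⟨e₁, he₁, by simp⟩

theorem exists_mem_SCPF_smul_add_smul_eq_right {d₁ d₂ : ℝ × ℝ} (hp : 0 ≤ p)
    (hne : (SCPF I₂).Nonempty) (h₁ : d₁ ∈ I₁) (h₂ : d₂ ∈ I₂)
    (hd : (1 - p) • d₁ + p • d₂ ∈ SCPF (PsiFeR I₁ I₂ p)) :
    ∃ e₂ ∈ SCPF I₂, (1 - p) • d₁ + p • e₂ = (1 - p) • d₁ + p • d₂ := by
  have hswap : ∀ e, (1 - p) • d₁ + p • e = (1 - (1 - p)) • e + (1 - p) • d₁ := fun e => by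
    rw [sub_sub_cancel, add_comm]
  rw [PsiFeR_comm, hswap] at hd
  simp only [hswap]
  exact exists_mem_SCPF_smul_add_smul_eq_left (by linarith) hne h₂ h₁ hd

theorem SCPF_PsiFeR_SCPF (hp₀ : 0 ≤ p) (hp₁ : p ≤ 1) (hI₁ : I₁.Finite) (hI₂ : I₂.Finite)
    (hne₁ : I₁.Nonempty) (hne₂ : I₂.Nonempty) :
    SCPF (PsiFeR I₁ I₂ p) = SCPF (PsiFeR (SCPF I₁) (SCPF I₂) p) := by
  have hsub : PsiFeR (SCPF I₁) (SCPF I₂) p ⊆ PsiFeR I₁ I₂ p :=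
    PsiFeR_mono (fun _ h => h.1) (fun _ h => h.1)
  have hdom : PsiFeR I₁ I₂ p ⊆ dominatedHull (PsiFeR (SCPF I₁) (SCPF I₂) p) := by
    intro d hd
    obtain ⟨d₁, h₁, d₂, h₂, rfl⟩ := mem_PsiFeR.1 hd
    obtain ⟨z₁, hz₁, hz₁d⟩ := hI₁.subset_dominatedHull_SCPF h₁
    obtain ⟨z₂, hz₂, hz₂d⟩ := hI₂.subset_dominatedHull_SCPF h₂
    refine ⟨(1 - p) • z₁ + p • z₂, ?_, hz₁d.smul_add_smul (by linarith) hp₀ hz₂d⟩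
    rw [convexHull_PsiFeR]
    exact mem_PsiFeR.2 ⟨z₁, hz₁, z₂, hz₂, rfl⟩
  refine (SCPF_subset_SCPF hsub hdom).antisymm' fun d hd => mem_SCPF_of_subset hsub hd ?_
  obtain ⟨d₁, h₁, d₂, h₂, rfl⟩ := mem_PsiFeR.1 hd.1
  obtain ⟨e₁, he₁, heq₁⟩ :=
    exists_mem_SCPF_smul_add_smul_eq_left hp₁ (hI₁.SCPF_nonempty hne₁) h₁ h₂ hd
  rw [← heq₁] at hd ⊢
  obtain ⟨e₂, he₂, heq₂⟩ :=
    exists_mem_SCPF_smul_add_smul_eq_right hp₀ (hI₂.SCPF_nonempty hne₂) he₁.1 h₂ hd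
  exact mem_PsiFeR.2 ⟨e₁, he₁, e₂, he₂, heq₂⟩

end PsiFeR

instance [Finite A] (Λ : Scenario F A) : Finite (Strategy Λ) := by
  unfold Strategy; infer_instance

instance (Λ : Scenario F A) : Nonempty (Strategy Λ) := ⟨fun _ _ => true⟩

section Recursion

variable [DecidableEq F] (f : F)

def extendAt (b : Bool) (x : {g : F // g ≠ f} → Bool) : F → Bool :=
  fun g => if h : g = f then b else x ⟨g, h⟩

theorem sum_eq_sum_extendAt [Fintype F] {M : Type*} [AddCommMonoid M]
    (G : (F → Bool) → M) : ∑ x, G x = ∑ b : Bool, ∑ x, G (extendAt f b x) := by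
  rw [← (Equiv.funSplitAt f Bool).symm.sum_comp, Fintype.sum_prod_type]
  congr! with b _ x
  ext g
  by_cases h : g = f
  · subst h; simp [extendAt, Equiv.funSplitAt, Equiv.piSplitAt]
  · simp [extendAt, Equiv.funSplitAt, Equiv.piSplitAt, h]

theorem wghtR_extendAt [Fintype F] (π : F → ℝ) (b : Bool) (x : {g : F // g ≠ f} → Bool) :
    wghtR π (extendAt f b x) = (if b then π f else 1 - π f) * wghtR (fun g => π g.1) x := by
  rw [wghtR, Fintype.prod_eq_mul_prod_subtype_ne _ f]
  simp only [extendAt, dite_true]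
  congr 1
  exact Finset.prod_congr rfl fun g _ => by simp only [dif_neg g.2]

theorem sum_wghtR_mul_eq [Fintype F] (π : F → ℝ) (G : (F → Bool) → ℝ) :
    ∑ x, wghtR π x * G x =
      (1 - π f) * ∑ x, wghtR (fun g => π g.1) x * G (extendAt f false x) +
        π f * ∑ x, wghtR (fun g => π g.1) x * G (extendAt f true x) := by
  simp only [sum_eq_sum_extendAt f, wghtR_extendAt, Fintype.sum_bool, Finset.mul_sum,
    mul_assoc, if_true, Bool.false_eq_true, if_false]
  rw [add_comm]

variable (Λ : Scenario F A)

theorem hatS_star_extendAt_false (hf : ∀ a, f ∈ Λ.Q a) (σ₀ : Strategy (Λ.reduceF f false))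
    (σ₁ : Strategy (Λ.reduceF f true)) (x : {g : F // g ≠ f} → Bool) :
    hatS Λ (star Λ f hf σ₀ σ₁) (extendAt f false x) = hatS (Λ.reduceF f false) σ₀ x := by
  funext a
  simp only [hatS, _root_.star, extendAt, dite_true, Bool.not_false, Bool.true_and,
    Bool.false_and, Bool.or_false]
  congr 1
  funext g
  exact dif_neg g.1.2

theorem hatS_star_extendAt_true (hf : ∀ a, f ∈ Λ.Q a) (σ₀ : Strategy (Λ.reduceF f false))
    (σ₁ : Strategy (Λ.reduceF f true)) (x : {g : F // g ≠ f} → Bool) :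
    hatS Λ (star Λ f hf σ₀ σ₁) (extendAt f true x) = hatS (Λ.reduceF f true) σ₁ x := by
  funext a
  simp only [hatS, _root_.star, extendAt, dite_true, Bool.not_true, Bool.true_and,
    Bool.false_and, Bool.false_or]
  congr 1
  funext g
  exact dif_neg g.1.2

theorem probR_star [Fintype F] (hf : ∀ a, f ∈ Λ.Q a) (π : F → ℝ)
    (σ₀ : Strategy (Λ.reduceF f false)) (σ₁ : Strategy (Λ.reduceF f true)) :
    probR Λ π (star Λ f hf σ₀ σ₁) =
      (1 - π f) * probR (Λ.reduceF f false) (fun g => π g.1) σ₀ +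
        π f * probR (Λ.reduceF f true) (fun g => π g.1) σ₁ := by
  simp only [probR, sum_wghtR_mul_eq f π, hatS_star_extendAt_false, hatS_star_extendAt_true]
  rfl

theorem expCostR_star [Fintype F] [Fintype A] (hf : ∀ a, f ∈ Λ.Q a) (π : F → ℝ) (γ : A → ℝ)
    (σ₀ : Strategy (Λ.reduceF f false)) (σ₁ : Strategy (Λ.reduceF f true)) :
    expCostR Λ π γ (star Λ f hf σ₀ σ₁) =
      (1 - π f) * expCostR (Λ.reduceF f false) (fun g => π g.1) γ σ₀ +
        π f * expCostR (Λ.reduceF f true) (fun g => π g.1) γ σ₁ := by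
  simp only [expCostR, sum_wghtR_mul_eq f π, hatS_star_extendAt_false, hatS_star_extendAt_true]

def Strategy.fixAt (σ : Strategy Λ) (b : Bool) : Strategy (Λ.reduceF f b) :=
  fun a x => σ a fun g => if h : g.1 = f then b else x ⟨⟨g.1, h⟩, Finset.mem_subtype.2 g.2⟩

theorem star_fixAt (hf : ∀ a, f ∈ Λ.Q a) (σ : Strategy Λ) :
    star Λ f hf (σ.fixAt f Λ false) (σ.fixAt f Λ true) = σ := by
  funext a x
  have hx : ∀ g : {g // g ∈ Λ.Q a}, g.1 = f → x ⟨f, hf a⟩ = x g := fun g h =>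
    congrArg x (Subtype.ext h.symm)
  cases hxf : x ⟨f, hf a⟩ <;>
    simp only [_root_.star, Strategy.fixAt, restr, hxf, Bool.not_false, Bool.not_true,
      Bool.true_and, Bool.false_and, Bool.or_false, Bool.false_or] <;>
    congr 1 <;> funext g <;> split_ifs with h <;> first | rfl | rw [← hx g h, hxf]

theorem range_eq_PsiFeR [Fintype F] [Fintype A] (hf : ∀ a, f ∈ Λ.Q a) (π : F → ℝ) (γ : A → ℝ) :
    Set.range (fun σ : Strategy Λ => (probR Λ π σ, expCostR Λ π γ σ)) =
      PsiFeR
        (Set.range (fun σ₀ : Strategy (Λ.reduceF f false) =>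
          (probR (Λ.reduceF f false) (fun g => π g.1) σ₀,
            expCostR (Λ.reduceF f false) (fun g => π g.1) γ σ₀)))
        (Set.range (fun σ₁ : Strategy (Λ.reduceF f true) =>
          (probR (Λ.reduceF f true) (fun g => π g.1) σ₁,
            expCostR (Λ.reduceF f true) (fun g => π g.1) γ σ₁)))
        (π f) := by
  ext d
  constructor
  · rintro ⟨σ, rfl⟩
    have hprob := probR_star f Λ hf π (σ.fixAt f Λ false) (σ.fixAt f Λ true)
    have hcost := expCostR_star f Λ hf π γ (σ.fixAt f Λ false) (σ.fixAt f Λ true)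
    rw [star_fixAt] at hprob hcost
    exact ⟨_, ⟨_, rfl⟩, _, ⟨_, rfl⟩, Prod.ext hprob hcost⟩
  · rintro ⟨_, ⟨σ₀, rfl⟩, _, ⟨σ₁, rfl⟩, rfl⟩
    exact ⟨star Λ f hf σ₀ σ₁,
      Prod.ext (probR_star f Λ hf π σ₀ σ₁) (expCostR_star f Λ hf π γ σ₀ σ₁)⟩

end Recursion

theorem PEC_recursion_f_general [Fintype F] [Fintype A] [DecidableEq F]
    (Λ : Scenario F A) (π : F → ℝ) (hπ : ∀ g, π g ∈ Set.Icc (0 : ℝ) 1)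
    (γ : A → ℝ)
    (f : F) (hf : ∀ a, f ∈ Λ.Q a) :
    SCPF (Set.range (fun σ : Strategy Λ => (probR Λ π σ, expCostR Λ π γ σ))) =
      SCPF (PsiFeR
        (SCPF (Set.range (fun σ0 : Strategy (Λ.reduceF f false) =>
          (probR (Λ.reduceF f false) (fun g => π g.1) σ0,
            expCostR (Λ.reduceF f false) (fun g => π g.1) γ σ0))))
        (SCPF (Set.range (fun σ1 : Strategy (Λ.reduceF f true) =>
          (probR (Λ.reduceF f true) (fun g => π g.1) σ1,
            expCostR (Λ.reduceF f true) (fun g => π g.1) γ σ1))))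
        (π f)) := by
  rw [range_eq_PsiFeR f Λ hf π γ]
  exact SCPF_PsiFeR_SCPF (hπ f).1 (hπ f).2 (Set.finite_range _) (Set.finite_range _)
    (Set.range_nonempty _) (Set.range_nonempty _)

/-- The recursion `PEC(Λ̂) = SCPF(Ψ_F^e(PEC(Λ̂^{f/0}), PEC(Λ̂^{f/1}), π_f))`, where
`PEC(Λ̂) = SCPF(τ_e(Σ_Λ))`. -/
theorem PEC_recursion_f [Fintype F] [Fintype A] [DecidableEq F]
    (Λ : Scenario F A) (π : F → ℝ) (hπ : ∀ g, π g ∈ Set.Icc (0 : ℝ) 1)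
    (γ : A → ℝ) (hγ : ∀ a, 0 ≤ γ a)
    (f : F) (hf : ∀ a, f ∈ Λ.Q a) :
    SCPF (Set.range (fun σ : Strategy Λ => (probR Λ π σ, expCostR Λ π γ σ))) =
      SCPF (PsiFeR
        (SCPF (Set.range (fun σ0 : Strategy (Λ.reduceF f false) =>
          (probR (Λ.reduceF f false) (fun g => π g.1) σ0,
            expCostR (Λ.reduceF f false) (fun g => π g.1) γ σ0))))
        (SCPF (Set.range (fun σ1 : Strategy (Λ.reduceF f true) =>
          (probR (Λ.reduceF f true) (fun g => π g.1) σ1,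
            expCostR (Λ.reduceF f true) (fun g => π g.1) γ σ1))))
        (π f)) :=
  PEC_recursion_f_general Λ π hπ γ f hf
end
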